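/- arXiv:2602.08691 — 3 statements merged into one kernel-verified Lean document; each statement's English description precedes it below -/
import Mathlib

section
/- Fix real numbers a > 0 and b, c < 1. For every κ > 1, the integral I_κ = ∫₀¹ (log((κ − s)/(1 − s)))^a · (1 − s)^{−b} · s^{−c} ds is finite. Moreover, I_κ → 0 as κ → 1⁺. -/
/-!
For `κ ≥ 1` and `s ∈ (0, 1)` the logarithm `log ((κ - s) / (1 - s))` is nonnegative, nondecreasing
in `κ`, and, since `log x ≤ x ^ δ / δ`, bounded by a multiple of `(1 - s) ^ (-ε / a)` for every
`ε > 0`. Hence the integrand is dominated by the Beta weight `s ^ (-c) * (1 - s) ^ (-(b + ε))`,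
which is integrable once `b + ε < 1`. As `κ → 1⁺` the integrand tends to `0` pointwise, and
dominated convergence, with the integrand at `κ = 2` as majorant, gives `I_κ → 0`.
-/

open MeasureTheory Filter Set Topology

theorem integrableOn_rpow_mul_one_sub_rpow {p q : ℝ} (hp : -1 < p) (hq : -1 < q) :
    IntegrableOn (fun s : ℝ => s ^ p * (1 - s) ^ q) (Ioo 0 1) := by
  have hbeta := Complex.betaIntegral_convergent (u := p + 1) (v := q + 1)
    (by simp; linarith) (by simp; linarith)
  refine (IntegrableOn.congr_fun hbeta.1.re (fun s hs => ?_) measurableSet_Ioc).mono_set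
    Ioo_subset_Ioc_self
  have h1s : 0 ≤ 1 - s := by linarith [hs.2]
  simp only [add_sub_cancel_right]
  rw [← Complex.ofReal_one, ← Complex.ofReal_sub, ← Complex.ofReal_cpow hs.1.le,
    ← Complex.ofReal_cpow h1s, ← Complex.ofReal_mul]
  rfl

section LogRatio

variable {κ κ' s : ℝ}

theorem log_div_one_sub_nonneg (hκ : 1 ≤ κ) (hs : s < 1) :
    0 ≤ Real.log ((κ - s) / (1 - s)) :=
  Real.log_nonneg <| (one_le_div (by linarith)).2 (by linarith)

theorem log_div_one_sub_le_of_le (hκ : 1 ≤ κ) (hκκ' : κ ≤ κ') (hs : s < 1) :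
    Real.log ((κ - s) / (1 - s)) ≤ Real.log ((κ' - s) / (1 - s)) := by
  gcongr
  exact div_pos (by linarith) (by linarith)

theorem log_div_one_sub_le {δ : ℝ} (hκ : 1 ≤ κ) (hs : s ∈ Ioo 0 1) (hδ : 0 < δ) :
    Real.log ((κ - s) / (1 - s)) ≤ κ ^ δ / δ * (1 - s) ^ (-δ) := by
  have h1s : 0 < 1 - s := by linarith [hs.2]
  calc Real.log ((κ - s) / (1 - s)) ≤ Real.log (κ / (1 - s)) := by
        gcongr
        · exact div_pos (by linarith [hs.2]) h1s
        · linarith [hs.1]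
    _ ≤ (κ / (1 - s)) ^ δ / δ := Real.log_le_rpow_div (by positivity) hδ
    _ = κ ^ δ / δ * (1 - s) ^ (-δ) := by
        rw [Real.div_rpow (by linarith) h1s.le, Real.rpow_neg h1s.le]
        ring

theorem tendsto_log_div_one_sub (hs : s < 1) :
    Tendsto (fun κ => Real.log ((κ - s) / (1 - s))) (𝓝 1) (𝓝 0) := by
  have h1s : 1 - s ≠ 0 := by linarith
  have : ContinuousAt (fun κ => Real.log ((κ - s) / (1 - s))) 1 := by
    fun_prop (disch := simp [h1s])
  simpa [div_self h1s] using this.tendsto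

end LogRatio

noncomputable def logKernel (a b c κ s : ℝ) : ℝ :=
  Real.log ((κ - s) / (1 - s)) ^ a * (1 - s) ^ (-b) * s ^ (-c)

section LogKernel

variable {a b c κ κ' s : ℝ}

theorem measurable_logKernel : Measurable (logKernel a b c κ) := by
  unfold logKernel
  fun_prop

theorem logKernel_nonneg (hκ : 1 ≤ κ) (hs : s ∈ Ioo 0 1) : 0 ≤ logKernel a b c κ s := by
  have hs0 := hs.1
  have h1s : 0 ≤ 1 - s := by linarith [hs.2]
  have hlog := log_div_one_sub_nonneg hκ hs.2
  unfold logKernel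
  positivity

theorem logKernel_le_of_le (ha : 0 ≤ a) (hκ : 1 ≤ κ) (hκκ' : κ ≤ κ') (hs : s ∈ Ioo 0 1) :
    logKernel a b c κ s ≤ logKernel a b c κ' s := by
  have hs0 := hs.1
  have h1s : 0 ≤ 1 - s := by linarith [hs.2]
  have hlog := log_div_one_sub_nonneg hκ hs.2
  unfold logKernel
  gcongr ?_ ^ _ * _ * _
  exact log_div_one_sub_le_of_le hκ hκκ' hs.2

theorem logKernel_le (ha : 0 < a) {ε : ℝ} (hε : 0 < ε) (hκ : 1 ≤ κ) (hs : s ∈ Ioo 0 1) :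
    logKernel a b c κ s ≤ (κ ^ (ε / a) / (ε / a)) ^ a * (s ^ (-c) * (1 - s) ^ (-(b + ε))) := by
  have h1s : 0 < 1 - s := by linarith [hs.2]
  have hδ : 0 < ε / a := div_pos hε ha
  have hlog : Real.log ((κ - s) / (1 - s)) ^ a ≤ (κ ^ (ε / a) / (ε / a)) ^ a * (1 - s) ^ (-ε) := by
    calc Real.log ((κ - s) / (1 - s)) ^ a
        ≤ (κ ^ (ε / a) / (ε / a) * (1 - s) ^ (-(ε / a))) ^ a := by
          gcongr
          · exact log_div_one_sub_nonneg hκ hs.2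
          · exact log_div_one_sub_le hκ hs hδ
      _ = (κ ^ (ε / a) / (ε / a)) ^ a * (1 - s) ^ (-ε) := by
          rw [Real.mul_rpow (by positivity) (by positivity), ← Real.rpow_mul h1s.le,
            neg_mul, div_mul_cancel₀ _ ha.ne']
  calc logKernel a b c κ s
      ≤ (κ ^ (ε / a) / (ε / a)) ^ a * (1 - s) ^ (-ε) * (1 - s) ^ (-b) * s ^ (-c) := by
        have hs0 := hs.1
        unfold logKernel
        gcongr
    _ = (κ ^ (ε / a) / (ε / a)) ^ a * (s ^ (-c) * (1 - s) ^ (-(b + ε))) := by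
        rw [neg_add, Real.rpow_add h1s]
        ring

theorem integrableOn_logKernel (ha : 0 < a) (hb : b < 1) (hc : c < 1) (hκ : 1 ≤ κ) :
    IntegrableOn (logKernel a b c κ) (Ioo 0 1) := by
  obtain ⟨ε, hε, hbε⟩ : ∃ ε, 0 < ε ∧ b + ε < 1 := ⟨(1 - b) / 2, by linarith, by linarith⟩
  have hweight := integrableOn_rpow_mul_one_sub_rpow (p := -c) (q := -(b + ε))
    (by linarith) (by linarith)
  refine (hweight.const_mul ((κ ^ (ε / a) / (ε / a)) ^ a)).mono'
    measurable_logKernel.aestronglyMeasurable ?_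
  filter_upwards [ae_restrict_mem measurableSet_Ioo] with s hs
  rw [Real.norm_of_nonneg (logKernel_nonneg hκ hs)]
  exact logKernel_le ha hε hκ hs

theorem tendsto_logKernel (ha : 0 < a) (hs : s < 1) :
    Tendsto (fun κ => logKernel a b c κ s) (𝓝 1) (𝓝 0) := by
  have := (((tendsto_log_div_one_sub hs).rpow_const (Or.inr ha.le)).mul_const
    ((1 - s) ^ (-b))).mul_const (s ^ (-c))
  simpa [logKernel, Real.zero_rpow ha.ne'] using this

theorem tendsto_integral_logKernel (ha : 0 < a) (hb : b < 1) (hc : c < 1) :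
    Tendsto (fun κ => ∫ s in Ioo 0 1, logKernel a b c κ s) (𝓝[>] 1) (𝓝 0) := by
  have hdom : ∀ᶠ κ in 𝓝[>] 1, ∀ᵐ s ∂volume.restrict (Ioo 0 1),
      ‖logKernel a b c κ s‖ ≤ logKernel a b c 2 s := by
    filter_upwards [Ioc_mem_nhdsGT one_lt_two] with κ hκ
    filter_upwards [ae_restrict_mem measurableSet_Ioo] with s hs
    rw [Real.norm_of_nonneg (logKernel_nonneg hκ.1.le hs)]
    exact logKernel_le_of_le ha.le hκ.1.le hκ.2 hs
  have hlim : ∀ᵐ s ∂volume.restrict (Ioo 0 1),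
      Tendsto (fun κ => logKernel a b c κ s) (𝓝[>] 1) (𝓝 0) := by
    filter_upwards [ae_restrict_mem measurableSet_Ioo] with s hs
    exact (tendsto_logKernel ha hs.2).mono_left nhdsWithin_le_nhds
  simpa using tendsto_integral_filter_of_dominated_convergence _
    (Eventually.of_forall fun _ => measurable_logKernel.aestronglyMeasurable) hdom
    (integrableOn_logKernel ha hb hc one_le_two) hlim

end LogKernel

/-- For fixed `a > 0` and `b, c < 1`, the integral
`I_κ = ∫₀¹ (log((κ−s)/(1−s)))^a (1−s)^(−b) s^(−c) ds` converges for every `κ > 1`,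
and `I_κ → 0` as `κ → 1⁺`. -/
theorem stmt_4 (a b c : ℝ) (ha : 0 < a) (hb : b < 1) (hc : c < 1) :
    (∀ κ : ℝ, 1 < κ →
      IntegrableOn
        (fun s : ℝ => (Real.log ((κ - s) / (1 - s))) ^ a * (1 - s) ^ (-b) * s ^ (-c))
        (Ioo 0 1)) ∧
    Tendsto
      (fun κ : ℝ => ∫ s in Ioo (0:ℝ) 1,
        (Real.log ((κ - s) / (1 - s))) ^ a * (1 - s) ^ (-b) * s ^ (-c))
      (nhdsWithin 1 (Ioi 1)) (nhds 0) :=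
  ⟨fun _ hκ => integrableOn_logKernel ha hb hc hκ.le, tendsto_integral_logKernel ha hb hc⟩
end

section
/- Let g(t) = Σ_{i=1}^n k_i·t^{α_i−1}·e^{c_i t} with k_i > 0, α_i > 0, c_i ∈ ℝ, and let ζ = 1 + min_i α_i. Then |ĝ(λ)|·|λ|^{ζ−1} → Σ_{s} k_{i_s}·Γ(α_{i_s}) > 0 as |λ| → ∞ within the sector {λ : Re(λ) > ω, |arg(λ − ω)| < η + π/2}, where the sum runs over all indices attaining min_i α_i, ω > max{0, c_1,...,c_n}, and η ∈ (0, π/2). In particular, limsup_{|λ|→∞} 1/(|ĝ(λ)|·|λ|^{ζ−1}) < ∞. -/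
/-!
For real `c` the points `z` and `z - c` have the same imaginary part, so once `‖z‖ > |c|` they
never lie on opposite sides of the branch cut and `arg (z / (z - c)) = arg z - arg (z - c)`.
Hence `z ^ s / (z - c) ^ s = (z / (z - c)) ^ s → 1` as `z → ∞` in every direction, while
`z ^ m / (z - c) ^ a` decays like `‖z‖ ^ (m - a)` when `m < a`. So `z ^ m ĝ(z)` tends to
`Σ_{αᵢ = m} kᵢ Γ(αᵢ)`, which is positive because `Γ > 0` on `(0, ∞)`.
-/

open Filter Set
open Bornology Topology

namespace Complex

lemma sub_ofReal_ne_zero_of_abs_lt_norm {z : ℂ} {c : ℝ} (hc : |c| < ‖z‖) : z - c ≠ 0 := by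
  rw [sub_ne_zero]
  rintro rfl
  simp at hc

lemma arg_div_sub_ofReal {z : ℂ} {c : ℝ} (hc : |c| < ‖z‖) :
    arg (z / (z - c)) = arg z - arg (z - c) := by
  have hz : z ≠ 0 := norm_pos_iff.mp ((abs_nonneg c).trans_lt hc)
  have hw := sub_ofReal_ne_zero_of_abs_lt_norm hc
  have him : (z - c).im = z.im := by simp
  rw [arg_coe_angle_eq_iff_eq_toReal.mp (arg_div_coe_angle hz hw), ← Real.Angle.coe_sub,
    Real.Angle.toReal_coe_eq_self_iff]
  have := neg_pi_lt_arg z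
  have := neg_pi_lt_arg (z - c)
  have := arg_le_pi z
  have := arg_le_pi (z - c)
  rcases lt_or_ge z.im 0 with hneg | hnonneg
  · have := arg_neg_iff.mpr hneg
    have := arg_neg_iff.mpr (him ▸ hneg)
    constructor <;> linarith
  · have hz0 := arg_nonneg_iff.mpr hnonneg
    have hw0 := arg_nonneg_iff.mpr (him ▸ hnonneg)
    refine ⟨?_, by linarith⟩
    rcases hz0.lt_or_eq with hpos | hzero
    · linarith
    · obtain ⟨hre, him0⟩ := arg_eq_zero_iff.mp hzero.symm
      have hnorm : ‖z‖ = z.re := by rw [← abs_re_eq_norm.mpr him0, abs_of_nonneg hre]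
      have hwre : 0 ≤ (z - c).re := by
        simp only [sub_re, ofReal_re]
        linarith [le_abs_self c]
      linarith [arg_lt_pi_iff.mpr (Or.inl hwre)]

lemma log_div_sub_ofReal {z : ℂ} {c : ℝ} (hc : |c| < ‖z‖) :
    log (z / (z - c)) = log z - log (z - c) := by
  have hz : ‖z‖ ≠ 0 := ((abs_nonneg c).trans_lt hc).ne'
  have hw : ‖z - c‖ ≠ 0 := norm_ne_zero_iff.mpr (sub_ofReal_ne_zero_of_abs_lt_norm hc)
  apply Complex.ext
  · simp [log_re, Real.log_div hz hw]
  · simp [log_im, arg_div_sub_ofReal hc]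

lemma div_sub_ofReal_cpow {z : ℂ} {c : ℝ} (hc : |c| < ‖z‖) (s : ℂ) :
    (z / (z - c)) ^ s = z ^ s / (z - c) ^ s := by
  have hz : z ≠ 0 := norm_pos_iff.mp ((abs_nonneg c).trans_lt hc)
  have hw := sub_ofReal_ne_zero_of_abs_lt_norm hc
  rw [cpow_def_of_ne_zero hz, cpow_def_of_ne_zero hw, cpow_def_of_ne_zero (div_ne_zero hz hw),
    log_div_sub_ofReal hc, sub_mul, exp_sub]

lemma tendsto_div_sub_cobounded (c : ℂ) :
    Tendsto (fun z : ℂ => z / (z - c)) (cobounded ℂ) (𝓝 1) := by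
  have hinv : Tendsto (fun z : ℂ => (z - c)⁻¹) (cobounded ℂ) (𝓝 0) :=
    tendsto_inv₀_cobounded.comp (tendsto_sub_const_cobounded c)
  have hlim : Tendsto (fun z : ℂ => 1 + c * (z - c)⁻¹) (cobounded ℂ) (𝓝 1) := by
    simpa using (hinv.const_mul c).const_add 1
  refine hlim.congr' ?_
  filter_upwards [tendsto_norm_cobounded_atTop.eventually_gt_atTop ‖c‖] with z hz
  have hw : z - c ≠ 0 := sub_ne_zero.mpr (ne_of_apply_ne norm hz.ne')
  field_simp
  ring

lemma tendsto_cpow_div_sub_ofReal_cpow (c : ℝ) (s : ℂ) :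
    Tendsto (fun z : ℂ => z ^ s / (z - c) ^ s) (cobounded ℂ) (𝓝 1) := by
  have := (continuousAt_cpow_const (b := s) one_mem_slitPlane).tendsto.comp
    (tendsto_div_sub_cobounded c)
  rw [one_cpow] at this
  refine this.congr' ?_
  filter_upwards [tendsto_norm_cobounded_atTop.eventually_gt_atTop |c|] with z hz
  exact div_sub_ofReal_cpow hz s

lemma tendsto_cpow_div_sub_ofReal_cpow_of_lt {m a : ℝ} (c : ℝ) (h : m < a) :
    Tendsto (fun z : ℂ => z ^ (m : ℂ) / (z - c) ^ (a : ℂ)) (cobounded ℂ) (𝓝 0) := by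
  have hdecay : Tendsto (fun z : ℂ => (z - c) ^ ((m - a : ℝ) : ℂ)) (cobounded ℂ) (𝓝 0) := by
    rw [tendsto_zero_iff_norm_tendsto_zero]
    simp_rw [norm_cpow_real]
    simpa [Function.comp_def] using (tendsto_rpow_neg_atTop (sub_pos.mpr h)).comp
      (tendsto_norm_cobounded_atTop.comp (tendsto_sub_const_cobounded (c : ℂ)))
  have := (tendsto_cpow_div_sub_ofReal_cpow c m).mul hdecay
  rw [mul_zero] at this
  refine this.congr' ?_
  filter_upwards [tendsto_norm_cobounded_atTop.eventually_gt_atTop |c|] with z hz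
  have hw := sub_ofReal_ne_zero_of_abs_lt_norm hz
  have hwm : (z - c) ^ (m : ℂ) ≠ 0 := by simp [hw]
  rw [ofReal_sub, cpow_sub _ _ hw, div_mul_div_cancel₀ hwm]

lemma tendsto_cpow_div_sub_ofReal_cpow_of_le {m a : ℝ} (c : ℝ) (h : m ≤ a) :
    Tendsto (fun z : ℂ => z ^ (m : ℂ) / (z - c) ^ (a : ℂ)) (cobounded ℂ)
      (𝓝 (if a = m then 1 else 0)) := by
  rcases h.eq_or_lt with rfl | hlt
  · simpa using tendsto_cpow_div_sub_ofReal_cpow c m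
  · simpa [hlt.ne'] using tendsto_cpow_div_sub_ofReal_cpow_of_lt c hlt

theorem tendsto_sum_div_sub_ofReal_cpow_mul_cpow {ι : Type*} (s : Finset ι) (a : ι → ℂ)
    (c α : ι → ℝ) {m : ℝ} (hm : ∀ i ∈ s, m ≤ α i) :
    Tendsto (fun z : ℂ => (∑ i ∈ s, a i / (z - c i) ^ (α i : ℂ)) * z ^ (m : ℂ)) (cobounded ℂ)
      (𝓝 (∑ i ∈ s with α i = m, a i)) := by
  have := tendsto_finsetSum s fun i hi =>
    (tendsto_cpow_div_sub_ofReal_cpow_of_le (c i) (hm i hi)).const_mul (a i)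
  simp only [mul_ite, mul_one, mul_zero, ← Finset.sum_filter] at this
  refine this.congr fun z => ?_
  rw [Finset.sum_mul]
  exact Finset.sum_congr rfl fun i _ => by ring

end Complex

theorem stmt_9_general (n : ℕ) (k α c : Fin n → ℝ)
    (hk : ∀ i, 0 < k i) (hα : ∀ i, 0 < α i)
    (m : ℝ) (hm : ∀ i, m ≤ α i) (hmem : ∃ i, α i = m)
    (ω η : ℝ) :
    Tendsto
      (fun lam : ℂ =>
        ‖∑ i, ((k i * Real.Gamma (α i) : ℝ) : ℂ) / (lam - (c i : ℂ)) ^ (α i : ℂ)‖ *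
          ‖lam‖ ^ ((1 + m) - 1))
      ((Filter.comap (fun z : ℂ => ‖z‖) Filter.atTop) ⊓
        Filter.principal {lam : ℂ | lam ≠ (ω : ℂ) ∧
          |Complex.arg (lam - (ω : ℂ))| < η + Real.pi / 2})
      (nhds (∑ i ∈ Finset.univ.filter (fun i => α i = m), k i * Real.Gamma (α i))) ∧
    (0 < ∑ i ∈ Finset.univ.filter (fun i => α i = m), k i * Real.Gamma (α i)) ∧
    (∃ C : ℝ, ∀ᶠ lam : ℂ in
      (Filter.comap (fun z : ℂ => ‖z‖) Filter.atTop) ⊓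
        Filter.principal {lam : ℂ | lam ≠ (ω : ℂ) ∧
          |Complex.arg (lam - (ω : ℂ))| < η + Real.pi / 2},
      1 / (‖∑ i, ((k i * Real.Gamma (α i) : ℝ) : ℂ) /
            (lam - (c i : ℂ)) ^ (α i : ℂ)‖ * ‖lam‖ ^ ((1 + m) - 1)) ≤ C) := by
  have hT : 0 < ∑ i ∈ Finset.univ.filter (fun i => α i = m), k i * Real.Gamma (α i) := by
    obtain ⟨i, hi⟩ := hmem
    exact Finset.sum_pos (fun j _ => mul_pos (hk j) (Real.Gamma_pos_of_pos (hα j)))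
      ⟨i, by simpa using hi⟩
  have hL : (comap (fun z : ℂ => ‖z‖) atTop ⊓ 𝓟 {lam : ℂ | lam ≠ (ω : ℂ) ∧
      |Complex.arg (lam - (ω : ℂ))| < η + Real.pi / 2}) ≤ cobounded ℂ :=
    inf_le_left.trans comap_norm_atTop.le
  have hlim := ((Complex.tendsto_sum_div_sub_ofReal_cpow_mul_cpow Finset.univ
    (fun i => ((k i * Real.Gamma (α i) : ℝ) : ℂ)) c α fun i _ => hm i).norm).mono_left hL
  simp only [norm_mul, Complex.norm_cpow_real, ← Complex.ofReal_sum, Complex.norm_real,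
    Real.norm_of_nonneg hT.le] at hlim
  rw [add_sub_cancel_left]
  exact ⟨hlim, hT, _,
    (tendsto_const_nhds.div hlim hT.ne').eventually (eventually_le_nhds (lt_add_one _))⟩

/-- With `ĝ(λ) = Σᵢ kᵢ Γ(αᵢ)/(λ−cᵢ)^{αᵢ}` and `ζ = 1 + minᵢ αᵢ`,
`|ĝ(λ)|·|λ|^{ζ−1}` tends to `Σ_{αᵢ = min} kᵢ Γ(αᵢ) > 0` as `|λ| → ∞` within the
sector `{λ : λ ≠ ω, |arg(λ−ω)| < η + π/2}`, `ω > max{0,c₁,…,cₙ}`, `η ∈ (0,π/2)`.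
In particular `1/(|ĝ(λ)|·|λ|^{ζ−1})` is eventually bounded. -/
theorem stmt_9 (n : ℕ) (k α c : Fin n → ℝ)
    (hk : ∀ i, 0 < k i) (hα : ∀ i, 0 < α i)
    (m : ℝ) (hm : ∀ i, m ≤ α i) (hmem : ∃ i, α i = m)
    (ω η : ℝ) (hω0 : 0 < ω) (hωc : ∀ i, c i < ω) (hη : η ∈ Ioo 0 (Real.pi / 2)) :
    Tendsto
      (fun lam : ℂ =>
        ‖∑ i, ((k i * Real.Gamma (α i) : ℝ) : ℂ) / (lam - (c i : ℂ)) ^ (α i : ℂ)‖ *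
          ‖lam‖ ^ ((1 + m) - 1))
      ((Filter.comap (fun z : ℂ => ‖z‖) Filter.atTop) ⊓
        Filter.principal {lam : ℂ | lam ≠ (ω : ℂ) ∧
          |Complex.arg (lam - (ω : ℂ))| < η + Real.pi / 2})
      (nhds (∑ i ∈ Finset.univ.filter (fun i => α i = m), k i * Real.Gamma (α i))) ∧
    (0 < ∑ i ∈ Finset.univ.filter (fun i => α i = m), k i * Real.Gamma (α i)) ∧
    (∃ C : ℝ, ∀ᶠ lam : ℂ in
      (Filter.comap (fun z : ℂ => ‖z‖) Filter.atTop) ⊓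
        Filter.principal {lam : ℂ | lam ≠ (ω : ℂ) ∧
          |Complex.arg (lam - (ω : ℂ))| < η + Real.pi / 2},
      1 / (‖∑ i, ((k i * Real.Gamma (α i) : ℝ) : ℂ) /
            (lam - (c i : ℂ)) ^ (α i : ℂ)‖ * ‖lam‖ ^ ((1 + m) - 1)) ≤ C) :=
  stmt_9_general n k α c hk hα m hm hmem ω η
end

section
/- Let X, Y be Banach spaces with Y continuously and densely embedded in X, let ζ > 1, β > 0, and let {S(t)}_{t>0} be a family of bounded operators on X with ‖S(t)‖_{B(X,Y)} ≤ M·t^{−ζβ} and ‖S(t)‖_{B(Y,Y)} ≤ M for all t ∈ (0, τ]. Then for every compact set J ⊂ X, lim_{t→0⁺} t^{ζβ}·sup_{x∈J} ‖S(t)x‖_Y = 0. -/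
/-!
Fix `δ > 0`. By compactness and density, every `x ∈ J` lies within `δ` of some `ι y` with
`‖y‖ ≤ C`, where `C` depends only on `δ` and `J`. Splitting `S(t) x = S(t) (x - ι y) + S(t) (ι y)`
gives `t^(ζβ) ‖S(t) x‖_Y ≤ M δ + t^(ζβ) M C`, whose second term vanishes as `t → 0⁺`.
-/

open Set Filter Topology Metric

theorem DenseRange.exists_bound_forall_dist_lt {X Z : Type*} [PseudoMetricSpace X] [Norm Z]
    {ι : Z → X} (hι : DenseRange ι) {J : Set X} (hJ : IsCompact J) {δ : ℝ} (hδ : 0 < δ) :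
    ∃ C, 0 ≤ C ∧ ∀ x ∈ J, ∃ y, ‖y‖ ≤ C ∧ dist x (ι y) < δ := by
  have hcover : J ⊆ ⋃ y, ball (ι y) δ := fun x _ ↦ by
    obtain ⟨y, hy⟩ := hι.exists_dist_lt x hδ
    exact mem_iUnion.2 ⟨y, hy⟩
  obtain ⟨s, hs⟩ := hJ.elim_finite_subcover _ (fun _ ↦ isOpen_ball) hcover
  obtain ⟨C, hC⟩ := (s.finite_toSet.image fun y ↦ ‖y‖).bddAbove
  refine ⟨max C 0, le_max_right _ _, fun x hx ↦ ?_⟩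
  obtain ⟨y, hys, hxy⟩ := mem_iUnion₂.1 (hs hx)
  exact ⟨y, (hC (mem_image_of_mem _ hys)).trans (le_max_left _ _), hxy⟩

section

variable {𝕜 X Y Z : Type*} [NontriviallyNormedField 𝕜]
  [SeminormedAddCommGroup X] [NormedSpace 𝕜 X] [SeminormedAddCommGroup Y] [NormedSpace 𝕜 Y]
  [Norm Z]

theorem ContinuousLinearMap.norm_apply_le_opNorm_mul_dist_add (T : X →L[𝕜] Y) (x x' : X) :
    ‖T x‖ ≤ ‖T‖ * dist x x' + ‖T x'‖ :=
  calc ‖T x‖ = ‖T (x - x') + T x'‖ := by rw [← map_add, sub_add_cancel]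
    _ ≤ ‖T (x - x')‖ + ‖T x'‖ := norm_add_le _ _
    _ ≤ ‖T‖ * dist x x' + ‖T x'‖ := by
      rw [dist_eq_norm]
      gcongr
      exact T.le_opNorm _

theorem ContinuousLinearMap.iSup_norm_apply_le_of_forall_dist_lt {T : X →L[𝕜] Y} {ι : Z → X}
    {J : Set X} {A M δ C : ℝ} (hT : ‖T‖ ≤ A) (hTι : ∀ y, ‖T (ι y)‖ ≤ M * ‖y‖) (hM : 0 ≤ M)
    (hδ : 0 ≤ δ) (hC : 0 ≤ C) (hJ : ∀ x ∈ J, ∃ y, ‖y‖ ≤ C ∧ dist x (ι y) < δ) :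
    ⨆ x ∈ J, ‖T x‖ ≤ A * δ + M * C := by
  have hA : 0 ≤ A := (norm_nonneg T).trans hT
  have hB : 0 ≤ A * δ + M * C := by positivity
  refine Real.iSup_le (fun x ↦ Real.iSup_le (fun hx ↦ ?_) hB) hB
  obtain ⟨y, hyC, hxy⟩ := hJ x hx
  calc ‖T x‖ ≤ ‖T‖ * dist x (ι y) + ‖T (ι y)‖ := T.norm_apply_le_opNorm_mul_dist_add x (ι y)
    _ ≤ A * δ + M * C := by
      gcongr
      exact (hTι y).trans (by gcongr)

end

theorem stmt_16_general {X Y : Type*} [NormedAddCommGroup X] [NormedSpace ℝ X]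
    [NormedAddCommGroup Y] [NormedSpace ℝ Y]
    (ι : Y →L[ℝ] X) (hι_dense : DenseRange ι)
    (ζ β M τ : ℝ) (hζ : 1 < ζ) (hβ : 0 < β) (hM : 0 < M) (hτ : 0 < τ)
    (S : ℝ → X →L[ℝ] Y)
    (hS1 : ∀ t ∈ Ioc (0:ℝ) τ, ‖S t‖ ≤ M * t ^ (-(ζ * β)))
    (hS2 : ∀ t ∈ Ioc (0:ℝ) τ, ∀ y : Y, ‖S t (ι y)‖ ≤ M * ‖y‖) :
    ∀ J : Set X, IsCompact J →
      Tendsto (fun t : ℝ => t ^ (ζ * β) * ⨆ x ∈ J, ‖S t x‖)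
        (nhdsWithin 0 (Ioi 0)) (nhds 0) := by
  intro J hJ
  have hp : 0 < ζ * β := mul_pos (one_pos.trans hζ) hβ
  have hpow : Tendsto (fun t : ℝ => t ^ (ζ * β)) (𝓝[>] 0) (𝓝 0) := by
    simpa [Real.zero_rpow hp.ne'] using
      (Real.continuousAt_rpow_const 0 (ζ * β) (Or.inr hp.le)).tendsto.mono_left nhdsWithin_le_nhds
  refine tendsto_order.2 ⟨fun a ha ↦ ?_, fun ε hε ↦ ?_⟩
  · filter_upwards [self_mem_nhdsWithin] with t (ht : 0 < t)
    exact ha.trans_le <| mul_nonneg (Real.rpow_nonneg ht.le _) <|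
      Real.iSup_nonneg fun x ↦ Real.iSup_nonneg fun _ ↦ norm_nonneg _
  obtain ⟨C, hC0, hC⟩ := hι_dense.exists_bound_forall_dist_lt hJ (δ := ε / (2 * M)) (by positivity)
  have hsmall : ∀ᶠ t in 𝓝[>] 0, t ^ (ζ * β) * (M * C) < ε / 2 := by
    have := hpow.mul_const (M * C)
    rw [zero_mul] at this
    exact this.eventually (gt_mem_nhds (half_pos hε))
  filter_upwards [hsmall, Ioc_mem_nhdsGT hτ] with t htC ht
  have hsup := (S t).iSup_norm_apply_le_of_forall_dist_lt (hS1 t ht) (hS2 t ht) hM.le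
    (by positivity) hC0 hC
  have htp : 0 < t ^ (ζ * β) := Real.rpow_pos_of_pos ht.1 _
  calc t ^ (ζ * β) * ⨆ x ∈ J, ‖S t x‖
      ≤ t ^ (ζ * β) * (M * t ^ (-(ζ * β)) * (ε / (2 * M)) + M * C) := by gcongr
    _ = ε / 2 + t ^ (ζ * β) * (M * C) := by
      rw [Real.rpow_neg ht.1.le]
      field_simp
    _ < ε := by linarith

/-- Abstract smoothing on compacts: if `Y` embeds continuously and densely into `X`
via `ι`, and `S(t) : X → Y` satisfies `‖S(t)‖_{B(X,Y)} ≤ M t^(−ζβ)` and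
`‖S(t)‖_{B(Y,Y)} ≤ M` on `(0, τ]`, then for every compact `J ⊆ X`,
`t^(ζβ)·sup_{x ∈ J} ‖S(t)x‖_Y → 0` as `t → 0⁺`. -/
theorem stmt_16 {X Y : Type*} [NormedAddCommGroup X] [NormedSpace ℝ X]
    [NormedAddCommGroup Y] [NormedSpace ℝ Y] [CompleteSpace X] [CompleteSpace Y]
    (ι : Y →L[ℝ] X) (hι_inj : Function.Injective ι) (hι_dense : DenseRange ι)
    (ζ β M τ : ℝ) (hζ : 1 < ζ) (hβ : 0 < β) (hM : 0 < M) (hτ : 0 < τ)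
    (S : ℝ → X →L[ℝ] Y)
    (hS1 : ∀ t ∈ Ioc (0:ℝ) τ, ‖S t‖ ≤ M * t ^ (-(ζ * β)))
    (hS2 : ∀ t ∈ Ioc (0:ℝ) τ, ∀ y : Y, ‖S t (ι y)‖ ≤ M * ‖y‖) :
    ∀ J : Set X, IsCompact J →
      Tendsto (fun t : ℝ => t ^ (ζ * β) * ⨆ x ∈ J, ‖S t x‖)
        (nhdsWithin 0 (Ioi 0)) (nhds 0) :=
  stmt_16_general ι hι_dense ζ β M τ hζ hβ hM hτ S hS1 hS2
end
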